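/- arXiv:1711.05927 — 3 statements merged into one kernel-verified Lean document; each statement's English description precedes it below -/
import Mathlib

section
/- Let N be any dimension and let x ∈ ℝ^N with 0 < |x| < 1. Set ρ = 2/(1 − |x|²), d = log((1 + |x|)/(1 − |x|)), A = 1 + ρ|x|² − ρ|x|/d and B = ρ|x|/d. Then A ≥ 0, moreover d·ρ|x| − A ≥ ρ|x|² ≥ 0, and d·ρ|x|·B − (B² − 1) ≥ 0. -/
/-!
Writing `t = |x|` and `d = 2 artanh t`, one has `ρ t = sinh d` and `1 + ρ t² = cosh d`, so that
`B = sinh d / d` and `A = cosh d - B`. All three inequalities then follow from the first two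
bounds `2 t ≤ d ≤ ρ t` given by the power series of `artanh`.
-/

open Real

lemma two_mul_le_log_one_add_div_one_sub {t : ℝ} (h₀ : 0 ≤ t) (h₁ : t < 1) :
    2 * t ≤ log ((1 + t) / (1 - t)) := by
  have h := sum_range_le_log_div h₀ h₁ 1
  norm_num at h
  linarith

lemma log_one_add_div_one_sub_le {t : ℝ} (h₀ : 0 ≤ t) (h₁ : t < 1) :
    log ((1 + t) / (1 - t)) ≤ 2 * t / (1 - t ^ 2) := by
  have h := log_div_le_sum_range_add h₀ h₁ 0
  norm_num at h
  rw [mul_div_assoc]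
  linarith

/-- positivity of the Pohozaev quantities `A` and `B`. -/
theorem pohozaev_quantities (N : ℕ) (x : EuclideanSpace ℝ (Fin N))
    (hx0 : 0 < ‖x‖) (hx1 : ‖x‖ < 1) (ρ d A B : ℝ)
    (hρ : ρ = 2 / (1 - ‖x‖ ^ 2))
    (hd : d = Real.log ((1 + ‖x‖) / (1 - ‖x‖)))
    (hA : A = 1 + ρ * ‖x‖ ^ 2 - ρ * ‖x‖ / d)
    (hB : B = ρ * ‖x‖ / d) :
    0 ≤ A ∧ ρ * ‖x‖ ^ 2 ≤ d * (ρ * ‖x‖) - A ∧ 0 ≤ ρ * ‖x‖ ^ 2 ∧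
      0 ≤ d * (ρ * ‖x‖) * B - (B ^ 2 - 1) := by
  set t := ‖x‖
  have ht : 0 < 1 - t ^ 2 := by nlinarith
  have hρt : ρ * (1 - t ^ 2) = 2 := by rw [hρ]; field_simp
  have hρ0 : 0 < ρ := by rw [hρ]; positivity
  have hd_lo : 2 * t ≤ d := by rw [hd]; exact two_mul_le_log_one_add_div_one_sub hx0.le hx1
  have hd_hi : d ≤ ρ * t := by
    rw [hd, hρ, div_mul_eq_mul_div]; exact log_one_add_div_one_sub_le hx0.le hx1
  have hd0 : 0 < d := by linarith
  have hBd : B * d = ρ * t := by rw [hB]; field_simp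
  have hB_ge : 1 ≤ B := hB ▸ (one_le_div hd0).2 hd_hi
  have hB_le : B ≤ 1 + ρ * t ^ 2 := by nlinarith
  have hcosh_sq : (ρ * t) ^ 2 + 1 = (1 + ρ * t ^ 2) ^ 2 := by linear_combination ρ * t ^ 2 * hρt
  rw [show A = 1 + ρ * t ^ 2 - B by rw [hA, hB],
    show d * (ρ * t) * B = (ρ * t) ^ 2 by rw [← hBd]; ring]
  refine ⟨by linarith, by nlinarith, by positivity, by nlinarith⟩
end

section
/- Let N ≥ 3, α > 2 − N and β > −N. Define F : B∖{0} → ℝ by F(x) = N + N ρ(x)|x|² + β ρ(x)|x|/d(x), where ρ(x) = 2/(1 − |x|²) and d(x) = log((1 + |x|)/(1 − |x|)). Then F is smooth on B∖{0} and for every x ∈ B∖{0} one has ∇·( d(x)^{α} ρ(x)^{N−2} ∇F(x) ) ≥ 0. -/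
open MeasureTheory Filter

noncomputable def rhoF {N : ℕ} (x : EuclideanSpace ℝ (Fin N)) : ℝ := 2 / (1 - ‖x‖ ^ 2)

noncomputable def dH {N : ℕ} (x : EuclideanSpace ℝ (Fin N)) : ℝ :=
  Real.log ((1 + ‖x‖) / (1 - ‖x‖))

def unitBall (N : ℕ) : Set (EuclideanSpace ℝ (Fin N)) := Metric.ball 0 1

def IsTestFn {N : ℕ} (u : EuclideanSpace ℝ (Fin N) → ℝ) : Prop :=
  ContDiff ℝ (⊤ : ℕ∞) u ∧ HasCompactSupport u ∧ tsupport u ⊆ unitBall N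

/-- Euclidean divergence of a vector field on `ℝ^N`. -/
noncomputable def divg {N : ℕ} (V : EuclideanSpace ℝ (Fin N) → EuclideanSpace ℝ (Fin N))
    (x : EuclideanSpace ℝ (Fin N)) : ℝ :=
  ∑ i, fderiv ℝ (fun y => V y i) x (EuclideanSpace.single i 1)


noncomputable def ddm (r : ℝ) : ℝ := Real.log ((1+r)/(1-r))

lemma hasDerivAt_ddm {r : ℝ} (h1 : -1 < r) (h2 : r < 1) :
    HasDerivAt ddm (2/(1-r^2)) r := by
  have hp : (0:ℝ) < 1 + r := by linarith
  have hm : (0:ℝ) < 1 - r := by linarith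
  have h : HasDerivAt (fun s : ℝ => Real.log (1+s) - Real.log (1-s))
      (1/(1+r) + 1/(1-r)) r := by
    have ha : HasDerivAt (fun s : ℝ => Real.log (1+s)) (1/(1+r)) r := by
      exact ((Real.hasDerivAt_log hp.ne').comp r
        ((hasDerivAt_id r).const_add 1)).congr_deriv (by simp)
    have hb : HasDerivAt (fun s : ℝ => Real.log (1-s)) (-(1/(1-r))) r := by
      exact ((Real.hasDerivAt_log hm.ne').comp r
        ((hasDerivAt_id r).neg.const_add 1)).congr_deriv (by simp)
    exact (ha.sub hb).congr_deriv (by ring)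
  have heq : ddm =ᶠ[nhds r] fun s : ℝ => Real.log (1+s) - Real.log (1-s) := by
    filter_upwards [eventually_gt_nhds (by linarith : (-1:ℝ) < r) |>.and
      (eventually_lt_nhds h2)] with s hs
    have : (0:ℝ) < 1 + s := by linarith [hs.1]
    have : (0:ℝ) < 1 - s := by linarith [hs.2]
    rw [ddm, Real.log_div (by linarith) (by linarith)]
  have h2' : HasDerivAt ddm (1/(1+r) + 1/(1-r)) r := h.congr_of_eventuallyEq heq
  convert h2' using 1
  have hu : (1:ℝ)-r^2 ≠ 0 := by nlinarith
  field_simp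
  ring

/-- helper: f 0 = 0, f' ≥ 0 on (0,1) ⇒ f r ≥ 0 on [0,1). -/
lemma nonneg_of_deriv (f f' : ℝ → ℝ)
    (hd : ∀ s : ℝ, -1 < s → s < 1 → HasDerivAt f (f' s) s)
    (h0 : f 0 = 0) (hn : ∀ s : ℝ, 0 < s → s < 1 → 0 ≤ f' s)
    {r : ℝ} (hr0 : 0 ≤ r) (hr1 : r < 1) : 0 ≤ f r := by
  rcases eq_or_lt_of_le hr0 with h | h
  · simp [← h, h0]
  have hmono : MonotoneOn f (Set.Icc 0 r) := by
    apply monotoneOn_of_deriv_nonneg (convex_Icc 0 r)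
    · intro s hs
      exact (hd s (by linarith [hs.1]) (by linarith [hs.2])).continuousAt.continuousWithinAt
    · intro s hs
      rw [interior_Icc] at hs
      exact (hd s (by linarith [hs.1]) (by linarith [hs.2])).differentiableAt.differentiableWithinAt
    · intro s hs
      rw [interior_Icc] at hs
      rw [(hd s (by linarith [hs.1]) (by linarith [hs.2])).deriv]
      exact hn s hs.1 (by linarith [hs.2])
  have := hmono (Set.left_mem_Icc.2 hr0) (Set.right_mem_Icc.2 hr0) hr0
  linarith [h0 ▸ this]

lemma ddm_zero : ddm 0 = 0 := by simp [ddm]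

lemma ddm_ge {r : ℝ} (hr0 : 0 ≤ r) (hr1 : r < 1) : 2*r ≤ ddm r := by
  have key := nonneg_of_deriv (fun s => ddm s - 2*s) (fun s => 2/(1-s^2) - 2)
    (fun s h1 h2 => by
      have h := (hasDerivAt_ddm h1 h2).sub ((hasDerivAt_id s).const_mul 2)
      refine h.congr_deriv ?_; simp)
    (by simp [ddm_zero]) ?_ hr0 hr1
  · simpa using key
  intro s hs0 hs1
  have h1 : (0:ℝ) < 1 - s^2 := by nlinarith
  have h2 : (2:ℝ) ≤ 2/(1-s^2) := by
    rw [le_div_iff₀ h1]; nlinarith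
  linarith

lemma ddm_le {r : ℝ} (hr0 : 0 ≤ r) (hr1 : r < 1) : ddm r ≤ 2*r/(1-r^2) := by
  have key := nonneg_of_deriv (fun s => 2*s/(1-s^2) - ddm s)
    (fun s => 4*s^2/(1-s^2)^2)
    (fun s h1 h2 => by
      have hu : (1:ℝ) - s^2 ≠ 0 := by nlinarith
      have hnum : HasDerivAt (fun t : ℝ => 2*t) 2 s := by simpa using (hasDerivAt_id s).const_mul 2
      have hden : HasDerivAt (fun t : ℝ => 1 - t^2) (-(2*s)) s := by
        simpa using ((hasDerivAt_pow 2 s).const_sub 1)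
      have h := (hnum.div hden hu).sub (hasDerivAt_ddm h1 h2)
      refine h.congr_deriv ?_
      field_simp
      ring)
    (by simp [ddm_zero]) ?_ hr0 hr1
  · simpa using key
  intro s hs0 hs1
  positivity

lemma ddm_pos {r : ℝ} (hr0 : 0 < r) (hr1 : r < 1) : 0 < ddm r :=
  lt_of_lt_of_le (by linarith) (ddm_ge hr0.le hr1)

lemma q_nonneg {r : ℝ} (hr0 : 0 ≤ r) (hr1 : r < 1) :
    0 ≤ 2*r*(ddm r)^2 - (1+r^2)*(ddm r) + 2*r := by
  have key := nonneg_of_deriv (fun s => 2*s*(ddm s)^2 - (1+s^2)*(ddm s) + 2*s)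
    (fun s => (2*(ddm s)^2*(1-s^2) - 2*s*(ddm s)*(1-s^2) + 8*s*ddm s - 4*s^2)/(1-s^2))
    (fun s h1 h2 => by
      have hu : (1:ℝ) - s^2 ≠ 0 := by nlinarith
      have hd := hasDerivAt_ddm h1 h2
      have hsq : HasDerivAt (fun t : ℝ => 1 + t^2) (2*s) s := by
        simpa using (hasDerivAt_pow 2 s).const_add 1
      have h := ((((hasDerivAt_id s).const_mul 2).mul (hd.pow 2)).sub
        (hsq.mul hd)).add ((hasDerivAt_id s).const_mul 2)
      refine h.congr_deriv ?_
      simp only [Pi.pow_apply, id]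
      field_simp
      ring)
    (by simp [ddm_zero]) ?_ hr0 hr1
  · simpa using key
  intro s hs0 hs1
  have hu : (0:ℝ) < 1 - s^2 := by nlinarith
  have hd2 : 2*s ≤ ddm s := ddm_ge hs0.le hs1
  have hdpos : 0 < ddm s := ddm_pos hs0 hs1
  apply div_nonneg _ hu.le
  nlinarith [mul_nonneg (mul_nonneg hdpos.le (sub_nonneg.2 hd2)) hu.le,
    mul_nonneg hs0.le (sub_nonneg.2 hd2)]

lemma C_nonneg {r : ℝ} (hr0 : 0 ≤ r) (hr1 : r < 1) :
    0 ≤ 2*r*(1+r^2)*(ddm r)^3 - (1+6*r^2+r^4)*(ddm r)^2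
      + 4*r*(1+r^2)*(ddm r) - 4*r^2 := by
  have key := nonneg_of_deriv
    (fun s => 2*s*(1+s^2)*(ddm s)^3 - (1+6*s^2+s^4)*(ddm s)^2 + 4*s*(1+s^2)*(ddm s) - 4*s^2)
    (fun s => 2*((1+2*s^2-3*s^4)*(ddm s)^3 + 2*s^3*(5+s^2)*(ddm s)^2
      - 8*s^2*(1+s^2)*(ddm s) + 8*s^3)/(1-s^2))
    (fun s h1 h2 => by
      have hu : (1:ℝ) - s^2 ≠ 0 := by nlinarith
      have hd := hasDerivAt_ddm h1 h2
      have hc1 : HasDerivAt (fun t : ℝ => 2*t*(1+t^2)) (2*(1+s^2) + 2*s*(2*s)) s := by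
        have := (((hasDerivAt_id s).const_mul 2).mul ((hasDerivAt_pow 2 s).const_add 1))
        refine this.congr_deriv ?_
        simp
      have hc2 : HasDerivAt (fun t : ℝ => 1+6*t^2+t^4) (12*s + 4*s^3) s := by
        have := (((hasDerivAt_pow 2 s).const_mul 6).const_add 1).add (hasDerivAt_pow 4 s)
        refine this.congr_deriv ?_; norm_num; ring
      have hc3 : HasDerivAt (fun t : ℝ => 4*t*(1+t^2)) (4*(1+s^2) + 4*s*(2*s)) s := by
        have := (((hasDerivAt_id s).const_mul 4).mul ((hasDerivAt_pow 2 s).const_add 1))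
        refine this.congr_deriv ?_
        simp
      have h := (((hc1.mul (hd.pow 3)).sub (hc2.mul (hd.pow 2))).add
        (hc3.mul hd)).sub ((hasDerivAt_pow 2 s).const_mul 4)
      refine h.congr_deriv ?_
      simp only [Pi.pow_apply]
      field_simp
      ring)
    (by simp [ddm_zero]) ?_ hr0 hr1
  · simpa using key
  intro s hs0 hs1
  have hu : (0:ℝ) < 1 - s^2 := by nlinarith
  have hd2 : 2*s ≤ ddm s := ddm_ge hs0.le hs1
  have hdpos : 0 < ddm s := ddm_pos hs0 hs1
  apply div_nonneg _ hu.le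
  have hp : (0:ℝ) < 1+7*s^2-2*s^4 := by nlinarith
  nlinarith [mul_nonneg hs0.le (sq_nonneg ((1+7*s^2-2*s^4)*(ddm s) - 2*s*(1+s^2))),
    mul_nonneg (mul_nonneg (mul_nonneg (sub_nonneg.2 hd2) (sq_nonneg (ddm s)))
      (by nlinarith : (0:ℝ) ≤ 1+2*s^2-3*s^4)) hp.le,
    mul_pos (mul_pos (mul_pos (mul_pos hs0 hs0) (mul_pos hs0 hs0)) hs0)
      (by nlinarith : (0:ℝ) < 5-3*s^2), hp]

lemma E_nonneg (Nr α β r d : ℝ) (hN : 3 ≤ Nr) (hα : 2 - Nr < α) (hβ : -Nr < β)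
    (hr0 : 0 < r) (hr1 : r < 1) (hd2 : 2*r ≤ d) (hdle : d*(1-r^2) ≤ 2*r)
    (hq : 0 ≤ 2*r*d^2 - (1+r^2)*d + 2*r)
    (hC : 0 ≤ 2*r*(1+r^2)*d^3 - (1+6*r^2+r^4)*d^2 + 4*r*(1+r^2)*d - 4*r^2) :
    0 ≤ 2*Nr^2*r*(1+r^2)*d^3
      + (β*((Nr-1)*(1+r^4)+(2*Nr+2)*r^2) + 4*Nr*α*r^2)*d^2
      + 2*β*(α-1-Nr)*r*(1+r^2)*d - 4*β*(α-2)*r^2 := by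
  have hd0 : 0 < d := lt_of_lt_of_le (by linarith) hd2
  set a := α - (2 - Nr) with ha_def
  set b := β + Nr with hb_def
  have ha : 0 < a := by simp [ha_def]; linarith
  have hb : 0 < b := by simp [hb_def]; linarith
  have hS : 0 ≤ 2*r*((1+r^2)*d - 2*r) := by nlinarith
  have hD : 0 ≤ d*((1+6*r^2+r^4)*d - 2*r*(1+r^2)) := by nlinarith
  have hm : 0 ≤ d*(2*r*(1+r^2) - (1-r^2)^2*d) := by
    have h1 : (0:ℝ) ≤ 1 - r^2 := by nlinarith
    nlinarith [mul_nonneg (sub_nonneg.2 hdle) h1, mul_pos (mul_pos hr0 hr0) hr0,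
      mul_nonneg (mul_nonneg hd0.le hr0.le) (mul_nonneg hr0.le hr0.le)]
  have hsq : 0 ≤ ((1+r^2)*d - 2*r)^2 := sq_nonneg _
  have hE : 2*Nr^2*r*(1+r^2)*d^3
      + (β*((Nr-1)*(1+r^4)+(2*Nr+2)*r^2) + 4*Nr*α*r^2)*d^2
      + 2*β*(α-1-Nr)*r*(1+r^2)*d - 4*β*(α-2)*r^2
      = Nr*(Nr*(2*r*(1+r^2)*d^3 - (1+6*r^2+r^4)*d^2 + 4*r*(1+r^2)*d - 4*r^2)
            + d*((1+6*r^2+r^4)*d - 2*r*(1+r^2)))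
        + a*(2*Nr*r*(2*r*d^2 - (1+r^2)*d + 2*r))
        + b*(Nr*((1+r^2)*d - 2*r)^2 + d*(2*r*(1+r^2) - (1-r^2)^2*d))
        + a*b*(2*r*((1+r^2)*d - 2*r)) := by
    simp only [ha_def, hb_def]; ring
  rw [hE]
  have h1 : 0 ≤ Nr := by linarith
  have := mul_nonneg (mul_nonneg ha.le hb.le) hS
  have := mul_nonneg ha.le (mul_nonneg (mul_nonneg (by linarith : (0:ℝ) ≤ 2*Nr) hr0.le) hq)
  have := mul_nonneg hb.le (add_nonneg (mul_nonneg h1 hsq) hm)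
  have := mul_nonneg h1 (add_nonneg (mul_nonneg h1 hC) hD)
  nlinarith [this]

noncomputable def phiF (N : ℕ) (β : ℝ) (r : ℝ) : ℝ :=
  4*N*r/(1-r^2)^2 + 2*β*((1+r^2)*ddm r - 2*r)/((1-r^2)^2*(ddm r)^2)

noncomputable def fR (N : ℕ) (β : ℝ) (r : ℝ) : ℝ :=
  (N:ℝ) + (N:ℝ)*(2/(1-r^2))*r^2 + β*(2/(1-r^2))*r/(ddm r)

lemma hasDerivAt_fR (N : ℕ) (β : ℝ) {r : ℝ} (hr0 : 0 < r) (hr1 : r < 1) :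
    HasDerivAt (fR N β) (phiF N β r) r := by
  have hu : (0:ℝ) < 1 - r^2 := by nlinarith
  have hdpos : 0 < ddm r := ddm_pos hr0 hr1
  have hd := hasDerivAt_ddm (by linarith) hr1
  have hden : HasDerivAt (fun t : ℝ => 1 - t^2) (-(2*r)) r := by
    simpa using ((hasDerivAt_pow 2 r).const_sub 1)
  have hrho := (hasDerivAt_const r (2:ℝ)).div hden hu.ne'
  have hsq := hasDerivAt_pow 2 r
  have hterm2 := (hrho.const_mul (N:ℝ)).mul hsq
  have hterm3 := ((hrho.const_mul β).mul (hasDerivAt_id' (𝕜 := ℝ) r)).div hd hdpos.ne'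
  have h := (hterm2.const_add (N:ℝ)).add hterm3
  refine h.congr_deriv ?_
  simp only [Pi.div_apply, Pi.mul_apply, Pi.pow_apply, Pi.add_apply, Pi.sub_apply]
  have hdne := hdpos.ne'
  rw [phiF]
  field_simp
  ring

noncomputable def Eexpr (N : ℕ) (α β r d : ℝ) : ℝ :=
  2*(N:ℝ)^2*r*(1+r^2)*d^3
    + (β*(((N:ℝ)-1)*(1+r^4)+(2*(N:ℝ)+2)*r^2) + 4*(N:ℝ)*α*r^2)*d^2
    + 2*β*(α-1-(N:ℝ))*r*(1+r^2)*d - 4*β*(α-2)*r^2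

noncomputable def GF (N : ℕ) (α β : ℝ) (r : ℝ) : ℝ :=
  (ddm r)^α * (2/(1-r^2))^((N:ℝ)-2) * (phiF N β r / r)

noncomputable def GdF (N : ℕ) (α β : ℝ) (r : ℝ) : ℝ :=
  (ddm r)^(α-3) * (2/(1-r^2))^((N:ℝ)-2) * (2/(r^2*(1-r^2)^3)) * Eexpr N α β r (ddm r)
    - ((N:ℝ)/r) * GF N α β r

lemma hasDerivAt_GF (N : ℕ) (α β : ℝ) {r : ℝ} (hr0 : 0 < r) (hr1 : r < 1) :
    HasDerivAt (GF N α β) (GdF N α β r) r := by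
  have hu : (0:ℝ) < 1 - r^2 := by nlinarith
  have hdpos : 0 < ddm r := ddm_pos hr0 hr1
  have hrhopos : (0:ℝ) < 2/(1-r^2) := by positivity
  have hd := hasDerivAt_ddm (by linarith) hr1
  have hden : HasDerivAt (fun t : ℝ => 1 - t^2) (-(2*r)) r := by
    simpa using ((hasDerivAt_pow 2 r).const_sub 1)
  have hrho := (hasDerivAt_const r (2:ℝ)).div hden hu.ne'
  have hA := hd.rpow_const (p := α) (Or.inl hdpos.ne')
  have hB := hrho.rpow_const (p := (N:ℝ)-2) (Or.inl hrhopos.ne')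
  -- phi combinator
  have hp1 := ((hasDerivAt_id' (𝕜 := ℝ) r).const_mul (4*(N:ℝ))).div
    (hden.pow 2) (by simp only [Pi.pow_apply]; positivity)
  have hv := (((hasDerivAt_pow 2 r).const_add 1).mul hd).sub
    ((hasDerivAt_id' (𝕜 := ℝ) r).const_mul 2)
  have hp2 := (hv.const_mul (2*β)).div ((hden.pow 2).mul (hd.pow 2))
    (by simp only [Pi.pow_apply, Pi.mul_apply]; positivity)
  have hphi := hp1.add hp2
  have h := (hA.mul hB).mul (hphi.div (hasDerivAt_id' (𝕜 := ℝ) r) hr0.ne')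
  show HasDerivAt (fun t => GF N α β t) _ r
  simp only [GF, phiF]
  refine h.congr_deriv ?_
  simp only [Pi.div_apply, Pi.mul_apply, Pi.pow_apply, Pi.add_apply, Pi.sub_apply]
  have e1 : (ddm r)^α = (ddm r)^(α-3) * (ddm r)^(3:ℕ) := by
    rw [← Real.rpow_natCast (ddm r) 3, ← Real.rpow_add hdpos]
    congr 1; push_cast; ring
  have e2 : (ddm r)^(α-1) = (ddm r)^(α-3) * (ddm r)^(2:ℕ) := by
    rw [← Real.rpow_natCast (ddm r) 2, ← Real.rpow_add hdpos]
    congr 1; push_cast; ring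
  have e3 : (2/(1-r^2))^((N:ℝ)-2) = (2/(1-r^2))^((N:ℝ)-2-1) * (2/(1-r^2)) := by
    rw [show ((N:ℝ)-2) = ((N:ℝ)-2-1)+1 by ring, Real.rpow_add hrhopos,
      Real.rpow_one]
    ring
  rw [GdF, Eexpr, GF, phiF, e1, e2, e3]
  generalize (ddm r)^(α-3) = P
  generalize (2/(1-r^2))^((N:ℝ)-2-1) = Q
  have hdne := hdpos.ne'
  field_simp
  ring

variable {N : ℕ}

lemma hasFDerivAt_norm' (x : EuclideanSpace ℝ (Fin N)) (hx : x ≠ 0) :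
    HasFDerivAt (fun y : EuclideanSpace ℝ (Fin N) => ‖y‖)
      (‖x‖⁻¹ • innerSL ℝ x) x := by
  have h1 : HasFDerivAt (fun y : EuclideanSpace ℝ (Fin N) => ‖y‖^2)
      (2 • (innerSL ℝ x)) x := (hasStrictFDerivAt_norm_sq x).hasFDerivAt
  have hx2 : ‖x‖^2 ≠ 0 := pow_ne_zero 2 (norm_ne_zero_iff.2 hx)
  have h2 := h1.sqrt hx2
  have heq : (fun y : EuclideanSpace ℝ (Fin N) => Real.sqrt (‖y‖^2))
      = fun y => ‖y‖ := funext fun y => Real.sqrt_sq (norm_nonneg y)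
  rw [heq] at h2
  refine h2.congr_fderiv ?_
  ext y
  have : Real.sqrt (‖x‖^2) = ‖x‖ := Real.sqrt_sq (norm_nonneg x)
  simp [this, two_smul]
  ring

open Topology
lemma mem_ball_facts {N : ℕ} {x : EuclideanSpace ℝ (Fin N)}
    (hx : x ∈ unitBall N \ {0}) : 0 < ‖x‖ ∧ ‖x‖ < 1 := by
  obtain ⟨h1, h2⟩ := hx
  refine ⟨norm_pos_iff.2 (by simpa using h2), ?_⟩
  simpa [unitBall, Metric.mem_ball, dist_zero_right] using h1

lemma gradient_formula {N : ℕ} (β : ℝ) {y : EuclideanSpace ℝ (Fin N)}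
    (hy : y ∈ unitBall N \ {0}) :
    HasGradientAt (fun z => fR N β ‖z‖) ((phiF N β ‖y‖ / ‖y‖) • y) y := by
  obtain ⟨hr0, hr1⟩ := mem_ball_facts hy
  have hy0 : y ≠ 0 := norm_pos_iff.1 hr0
  have hFD : HasFDerivAt (fun z => fR N β ‖z‖)
      ((phiF N β ‖y‖) • (‖y‖⁻¹ • innerSL ℝ y)) y :=
    (hasDerivAt_fR N β hr0 hr1).comp_hasFDerivAt y (hasFDerivAt_norm' y hy0)
  rw [hasGradientAt_iff_hasFDerivAt]
  refine hFD.congr_fderiv ?_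
  ext z
  simp [InnerProductSpace.toDual_apply_apply, inner_smul_left]
  ring

/-- `F = ∇·(d^β ρ^N x)/(d^β ρ^N)` is smooth on `B∖{0}` and
    `∇·(d^α ρ^{N-2} ∇F) ≥ 0` there. -/
theorem weighted_laplacian_F_nonneg (N : ℕ) (hN : 3 ≤ N) (α β : ℝ)
    (hα : 2 - (N : ℝ) < α) (hβ : -(N : ℝ) < β)
    (F : EuclideanSpace ℝ (Fin N) → ℝ)
    (hF : ∀ x, F x = (N : ℝ) + (N : ℝ) * rhoF x * ‖x‖ ^ 2 + β * rhoF x * ‖x‖ / dH x) :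
    ContDiffOn ℝ (⊤ : ℕ∞) F (unitBall N \ {0}) ∧
    ∀ x ∈ unitBall N \ {0},
      0 ≤ divg (fun y => (dH y ^ α * rhoF y ^ ((N : ℝ) - 2)) • gradient F y) x := by
  have hN3 : (3:ℝ) ≤ (N:ℝ) := by exact_mod_cast hN
  obtain rfl : F = fun y => fR N β ‖y‖ := funext fun y => by rw [hF]; rfl
  have hopen : IsOpen (unitBall N \ {0}) :=
    Metric.isOpen_ball.sdiff isClosed_singleton
  constructor
  · -- smoothness
    intro x hx
    obtain ⟨hr0, hr1⟩ := mem_ball_facts hx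
    have hx0 : x ≠ 0 := norm_pos_iff.1 hr0
    have hu : (1:ℝ) - ‖x‖^2 ≠ 0 := by nlinarith
    have hdne : ddm ‖x‖ ≠ 0 := (ddm_pos hr0 hr1).ne'
    have hn : ContDiffAt ℝ (⊤ : ℕ∞) (fun y : EuclideanSpace ℝ (Fin N) => ‖y‖) x :=
      contDiffAt_norm ℝ hx0
    have hrho : ContDiffAt ℝ (⊤ : ℕ∞) (fun y : EuclideanSpace ℝ (Fin N) => 2/(1-‖y‖^2)) x :=
      contDiffAt_const.div (contDiffAt_const.sub (hn.pow 2)) hu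
    have hdd : ContDiffAt ℝ (⊤ : ℕ∞)
        (fun y : EuclideanSpace ℝ (Fin N) => Real.log ((1+‖y‖)/(1-‖y‖))) x := by
      apply ContDiffAt.log
      · exact (contDiffAt_const.add hn).div (contDiffAt_const.sub hn) (by linarith)
      · exact (div_pos (by linarith) (by linarith)).ne'
    apply ContDiffAt.contDiffWithinAt
    have : ContDiffAt ℝ (⊤ : ℕ∞) (fun y : EuclideanSpace ℝ (Fin N) =>
        (N:ℝ) + (N:ℝ)*(2/(1-‖y‖^2))*‖y‖^2
          + β*(2/(1-‖y‖^2))*‖y‖/(Real.log ((1+‖y‖)/(1-‖y‖)))) x := by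
      exact (contDiffAt_const.add ((contDiffAt_const.mul hrho).mul (hn.pow 2))).add
        (((contDiffAt_const.mul hrho).mul hn).div hdd hdne)
    exact this.congr_of_eventuallyEq (Filter.Eventually.of_forall fun y => rfl)
  · -- divergence nonneg
    intro x hx
    obtain ⟨hr0, hr1⟩ := mem_ball_facts hx
    have hx0 : x ≠ 0 := norm_pos_iff.1 hr0
    set r : ℝ := ‖x‖ with hr_def
    have hu : (0:ℝ) < 1 - r^2 := by nlinarith
    have hdpos : 0 < ddm r := ddm_pos hr0 hr1
    have hnhds : (unitBall N \ {0}) ∈ 𝓝 x := hopen.mem_nhds hx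
    -- eventual equality of the vector field
    have hVev : (fun y => (dH y ^ α * rhoF y ^ ((N : ℝ) - 2)) •
        gradient (fun z => fR N β ‖z‖) y) =ᶠ[𝓝 x]
        (fun y => GF N α β ‖y‖ • y) := by
      filter_upwards [hnhds] with y hy
      rw [(gradient_formula β hy).gradient, smul_smul, GF]
      rfl
    -- derivative of the model field component
    have hnormD := hasFDerivAt_norm' x hx0
    have hGd := (hasDerivAt_GF N α β hr0 hr1).comp_hasFDerivAt x hnormD
    have hcomp : ∀ i : Fin N, HasFDerivAt
        (fun y : EuclideanSpace ℝ (Fin N) => GF N α β ‖y‖ * y i)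
        ((GF N α β r) • (EuclideanSpace.proj i)
          + (x i) • ((GdF N α β r) • (r⁻¹ • innerSL ℝ x))) x := by
      intro i
      exact hGd.mul ((EuclideanSpace.proj (𝕜 := ℝ) i).hasFDerivAt)
    have hfd_eq : ∀ i : Fin N,
        fderiv ℝ (fun y => ((dH y ^ α * rhoF y ^ ((N : ℝ) - 2)) •
          gradient (fun z => fR N β ‖z‖) y) i) x
        = (GF N α β r) • (EuclideanSpace.proj i)
          + (x i) • ((GdF N α β r) • (r⁻¹ • innerSL ℝ x)) := by
      intro i
      have hev_i : (fun y => ((dH y ^ α * rhoF y ^ ((N : ℝ) - 2)) •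
          gradient (fun z => fR N β ‖z‖) y) i) =ᶠ[𝓝 x]
          (fun y => GF N α β ‖y‖ * y i) := by
        filter_upwards [hVev] with y hy
        rw [hy]
        rfl
      rw [hev_i.fderiv_eq, (hcomp i).fderiv]
    rw [divg]
    have happ : ∀ i : Fin N,
        ((GF N α β r) • (EuclideanSpace.proj (𝕜 := ℝ) i)
          + (x i) • ((GdF N α β r) • (r⁻¹ • innerSL ℝ x)))
          (EuclideanSpace.single i 1)
        = GF N α β r + x i * (GdF N α β r * (r⁻¹ * (x i))) := by
      intro i
      have h1 : (EuclideanSpace.proj (𝕜 := ℝ) i) (EuclideanSpace.single i (1:ℝ)) = 1 := by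
        simp [EuclideanSpace.single_apply]
      have h2 : (innerSL ℝ x) (EuclideanSpace.single i (1:ℝ)) = x i := by
        simp [EuclideanSpace.inner_single_right]
      simp [h1, h2]
    have hsum2 : ∑ i, x i * x i = r^2 := by
      have h := real_inner_self_eq_norm_sq x
      rw [PiLp.inner_apply] at h
      simpa [RCLike.inner_apply, ← sq, hr_def] using h
    have htotal : ∑ i, fderiv ℝ (fun y => ((dH y ^ α * rhoF y ^ ((N : ℝ) - 2)) •
          gradient (fun z => fR N β ‖z‖) y) i) x (EuclideanSpace.single i 1)
        = (N:ℝ) * GF N α β r + r * GdF N α β r := by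
      rw [Finset.sum_congr rfl (fun i _ => by rw [hfd_eq i, happ i])]
      rw [Finset.sum_add_distrib]
      simp only [Finset.sum_const, Finset.card_univ, Fintype.card_fin, nsmul_eq_mul]
      have : ∑ i, x i * (GdF N α β r * (r⁻¹ * (x i)))
          = GdF N α β r * r⁻¹ * ∑ i, x i * x i := by
        rw [Finset.mul_sum]
        exact Finset.sum_congr rfl fun i _ => by ring
      rw [this, hsum2]
      field_simp
    rw [htotal]
    -- final positivity
    have hkey : (N:ℝ) * GF N α β r + r * GdF N α β r
        = (ddm r)^(α-3) * (2/(1-r^2))^((N:ℝ)-2) * (2/(r*(1-r^2)^3))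
          * Eexpr N α β r (ddm r) := by
      rw [GdF]
      field_simp
      ring
    rw [hkey]
    have hdle : ddm r * (1-r^2) ≤ 2*r := by
      have := ddm_le hr0.le hr1
      rw [le_div_iff₀ hu] at this
      linarith
    have hE := E_nonneg (N:ℝ) α β r (ddm r) hN3 hα hβ hr0 hr1
      (ddm_ge hr0.le hr1) hdle (q_nonneg hr0.le hr1) (C_nonneg hr0.le hr1)
    have hEeq : Eexpr N α β r (ddm r) = 2*(N:ℝ)^2*r*(1+r^2)*(ddm r)^3
      + (β*(((N:ℝ)-1)*(1+r^4)+(2*(N:ℝ)+2)*r^2) + 4*(N:ℝ)*α*r^2)*(ddm r)^2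
      + 2*β*(α-1-(N:ℝ))*r*(1+r^2)*(ddm r) - 4*β*(α-2)*r^2 := rfl
    have hp1 : (0:ℝ) < (ddm r)^(α-3) := Real.rpow_pos_of_pos hdpos _
    have hp2 : (0:ℝ) < (2/(1-r^2))^((N:ℝ)-2) := Real.rpow_pos_of_pos (by positivity) _
    have hp3 : (0:ℝ) < 2/(r*(1-r^2)^3) := by positivity
    have : 0 ≤ Eexpr N α β r (ddm r) := by rw [hEeq]; convert hE using 2 <;> ring
    positivity
end

section
/- Let N ≥ 1 and α ∈ ℝ. For every x ∈ ℝ^N with 0 < |x| < 1, writing ρ = ρ(x) = 2/(1 − |x|²) and d = d(x) = log((1 + |x|)/(1 − |x|)), the function G(x) = ρ(x)|x|/d(x) is smooth on B∖{0} and ∇·( d^{α} ρ^{N−2} ∇G )(x) = d^{α−1} ρ^{N} [ ( N + N ρ|x|² + (α−1) ρ|x|/d ) ( 1/(ρ|x|) + |x| − 1/d ) + ρ|x|/d² − 1/(ρ|x|) ]. -/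
open MeasureTheory Filter

open Topology

namespace WLG

noncomputable def Rs (s : ℝ) : ℝ := 2 / (1 - s)
noncomputable def Ds (s : ℝ) : ℝ := Real.log ((1 + Real.sqrt s) / (1 - Real.sqrt s))
noncomputable def Ws (s : ℝ) : ℝ := Rs s * Real.sqrt s / Ds s
noncomputable def Wd (s : ℝ) : ℝ :=
  (Rs s ^ 2 * Real.sqrt s / 2 + Rs s / (2 * Real.sqrt s)) / Ds s - Rs s ^ 2 / (2 * Ds s ^ 2)
noncomputable def Wdd (s : ℝ) : ℝ :=
  (Rs s ^ 3 * Real.sqrt s / 2 + Rs s ^ 2 / (2 * Real.sqrt s) - Rs s / (4 * Real.sqrt s ^ 3)) / Ds s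
    - (Rs s ^ 2 * Real.sqrt s / 2 + Rs s / (2 * Real.sqrt s)) * Rs s / (2 * Real.sqrt s * Ds s ^ 2)
    - Rs s ^ 3 / (2 * Ds s ^ 2) + Rs s ^ 3 / (2 * Real.sqrt s * Ds s ^ 3)
noncomputable def Ps (α n s : ℝ) : ℝ := Ds s ^ α * Rs s ^ (n - 2)
noncomputable def Pd (α n s : ℝ) : ℝ :=
  α * Ds s ^ (α - 1) * Rs s ^ (n - 2) * (Rs s / (2 * Real.sqrt s))
    + (n - 2) / 2 * (Ds s ^ α * Rs s ^ (n - 2) * Rs s)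
noncomputable def Cs (α n s : ℝ) : ℝ := 2 * Ps α n s * Wd s
noncomputable def Cd (α n s : ℝ) : ℝ := 2 * (Pd α n s * Wd s + Ps α n s * Wdd s)

variable {s : ℝ}

lemma sqrt_pos' (h0 : 0 < s) : 0 < Real.sqrt s := Real.sqrt_pos.2 h0
lemma sqrt_lt_one' (h0 : 0 < s) (h1 : s < 1) : Real.sqrt s < 1 := by
  rw [show (1:ℝ) = Real.sqrt 1 by simp]
  exact Real.sqrt_lt_sqrt h0.le h1

lemma Rs_pos (h1 : s < 1) : 0 < Rs s := by
  unfold Rs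
  have : 0 < 1 - s := by linarith
  positivity

lemma Ds_pos (h0 : 0 < s) (h1 : s < 1) : 0 < Ds s := by
  have hr := sqrt_pos' h0
  have hr1 := sqrt_lt_one' h0 h1
  unfold Ds
  apply Real.log_pos
  rw [lt_div_iff₀ (by linarith)]
  linarith

lemma hasDerivAt_Rs (h1 : s < 1) : HasDerivAt Rs (Rs s ^ 2 / 2) s := by
  have hne : (1 : ℝ) - s ≠ 0 := by linarith
  have h : HasDerivAt (fun t : ℝ => 1 - t) (-1) s := by
    simpa using (hasDerivAt_id s).const_sub 1
  have h2 : HasDerivAt (fun t : ℝ => 2 / (1 - t)) (2 / (1 - s) ^ 2) s := by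
    have h3 := (hasDerivAt_const s (2:ℝ)).div h hne
    exact h3.congr_deriv (by ring)
  refine h2.congr_deriv ?_
  unfold Rs
  field_simp

lemma hasDerivAt_Ds (h0 : 0 < s) (h1 : s < 1) :
    HasDerivAt Ds (Rs s / (2 * Real.sqrt s)) s := by
  have hr := sqrt_pos' h0
  have hr1 := sqrt_lt_one' h0 h1
  have hs : HasDerivAt Real.sqrt (1 / (2 * Real.sqrt s)) s := Real.hasDerivAt_sqrt h0.ne'
  have hnum : HasDerivAt (fun t => 1 + Real.sqrt t) (1 / (2 * Real.sqrt s)) s := hs.const_add 1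
  have hden : HasDerivAt (fun t => 1 - Real.sqrt t) (-(1 / (2 * Real.sqrt s))) s := hs.const_sub 1
  have hq : HasDerivAt (fun t => (1 + Real.sqrt t) / (1 - Real.sqrt t))
      ((1 / (2 * Real.sqrt s) * (1 - Real.sqrt s) - (1 + Real.sqrt s) * (-(1 / (2 * Real.sqrt s)))) / (1 - Real.sqrt s) ^ 2) s :=
    hnum.div hden (by linarith)
  have hpos : 0 < (1 + Real.sqrt s) / (1 - Real.sqrt s) := by
    apply div_pos (by linarith) (by linarith)
  have := hq.log hpos.ne'
  refine this.congr_deriv ?_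
  unfold Rs
  have hsq : Real.sqrt s ^ 2 = s := Real.sq_sqrt h0.le
  have h2 : (1 : ℝ) - s = (1 - Real.sqrt s) * (1 + Real.sqrt s) := by nlinarith [hsq]
  have e1 : (1 : ℝ) - Real.sqrt s ≠ 0 := by linarith
  have e2 : (1 : ℝ) + Real.sqrt s ≠ 0 := by linarith
  have e3 : Real.sqrt s ≠ 0 := hr.ne'
  rw [h2]
  field_simp
  ring


lemma hasDerivAt_Ws (h0 : 0 < s) (h1 : s < 1) : HasDerivAt Ws (Wd s) s := by
  have hr := sqrt_pos' h0
  have hD := Ds_pos h0 h1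
  have hs : HasDerivAt Real.sqrt (1 / (2 * Real.sqrt s)) s := Real.hasDerivAt_sqrt h0.ne'
  have hR := hasDerivAt_Rs h1
  have hDs := hasDerivAt_Ds h0 h1
  have h : HasDerivAt (fun t => Rs t * Real.sqrt t / Ds t)
      (((Rs s ^ 2 / 2 * Real.sqrt s + Rs s * (1 / (2 * Real.sqrt s))) * Ds s
        - Rs s * Real.sqrt s * (Rs s / (2 * Real.sqrt s))) / Ds s ^ 2) s :=
    (hR.mul hs).div hDs hD.ne'
  have he : Ws = fun t => Rs t * Real.sqrt t / Ds t := rfl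
  rw [he]
  refine h.congr_deriv ?_
  unfold Wd
  field_simp

lemma hasDerivAt_Wd (h0 : 0 < s) (h1 : s < 1) : HasDerivAt Wd (Wdd s) s := by
  have hr := sqrt_pos' h0
  have hD := Ds_pos h0 h1
  have hs : HasDerivAt Real.sqrt (1 / (2 * Real.sqrt s)) s := Real.hasDerivAt_sqrt h0.ne'
  have hR := hasDerivAt_Rs h1
  have hDs := hasDerivAt_Ds h0 h1
  have hR2 : HasDerivAt (fun t => Rs t ^ 2) (2 * Rs s ^ 1 * (Rs s ^ 2 / 2)) s := hR.pow 2
  have hA1 : HasDerivAt (fun t => Rs t ^ 2 * Real.sqrt t / 2)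
      ((2 * Rs s ^ 1 * (Rs s ^ 2 / 2) * Real.sqrt s + Rs s ^ 2 * (1 / (2 * Real.sqrt s))) / 2) s :=
    (hR2.mul hs).div_const 2
  have hden : HasDerivAt (fun t => 2 * Real.sqrt t) (2 * (1 / (2 * Real.sqrt s))) s :=
    hs.const_mul 2
  have hA2 : HasDerivAt (fun t => Rs t / (2 * Real.sqrt t))
      ((Rs s ^ 2 / 2 * (2 * Real.sqrt s) - Rs s * (2 * (1 / (2 * Real.sqrt s)))) / (2 * Real.sqrt s) ^ 2) s :=
    hR.div hden (by positivity)
  have hA := hA1.add hA2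
  have hT1 := hA.div hDs hD.ne'
  have hD2 : HasDerivAt (fun t => 2 * Ds t ^ 2) (2 * (2 * Ds s ^ 1 * (Rs s / (2 * Real.sqrt s)))) s :=
    (hDs.pow 2).const_mul 2
  have hB : HasDerivAt (fun t => Rs t ^ 2 / (2 * Ds t ^ 2))
      ((2 * Rs s ^ 1 * (Rs s ^ 2 / 2) * (2 * Ds s ^ 2) - Rs s ^ 2 * (2 * (2 * Ds s ^ 1 * (Rs s / (2 * Real.sqrt s))))) / (2 * Ds s ^ 2) ^ 2) s :=
    hR2.div hD2 (by positivity)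
  have h := hT1.sub hB
  have he : Wd = fun t => (Rs t ^ 2 * Real.sqrt t / 2 + Rs t / (2 * Real.sqrt t)) / Ds t
      - Rs t ^ 2 / (2 * Ds t ^ 2) := rfl
  rw [he]
  refine h.congr_deriv ?_
  unfold Wdd
  simp only [Pi.add_apply]
  field_simp
  ring

lemma hasDerivAt_Ps (α n : ℝ) (h0 : 0 < s) (h1 : s < 1) :
    HasDerivAt (Ps α n) (Pd α n s) s := by
  have hr := sqrt_pos' h0
  have hD := Ds_pos h0 h1
  have hRp := Rs_pos h1
  have hR := hasDerivAt_Rs h1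
  have hDs := hasDerivAt_Ds h0 h1
  have h1' : HasDerivAt (fun t => Ds t ^ α) (Rs s / (2 * Real.sqrt s) * α * Ds s ^ (α - 1)) s :=
    hDs.rpow_const (Or.inl hD.ne')
  have h2' : HasDerivAt (fun t => Rs t ^ (n - 2)) (Rs s ^ 2 / 2 * (n - 2) * Rs s ^ (n - 2 - 1)) s :=
    hR.rpow_const (Or.inl hRp.ne')
  have h := h1'.mul h2'
  have he : Ps α n = fun t => Ds t ^ α * Rs t ^ (n - 2) := rfl
  rw [he]
  refine h.congr_deriv ?_
  unfold Pd
  have hsub : Rs s ^ (n - 2 - 1) = Rs s ^ (n - 2) / Rs s := by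
    rw [Real.rpow_sub_one hRp.ne']
  rw [hsub]
  field_simp

lemma hasDerivAt_Cs (α n : ℝ) (h0 : 0 < s) (h1 : s < 1) :
    HasDerivAt (Cs α n) (Cd α n s) s := by
  have h := ((hasDerivAt_Ps α n h0 h1).mul (hasDerivAt_Wd h0 h1)).const_mul 2
  have he : Cs α n = fun t => 2 * (Ps α n t * Wd t) := by
    funext t; unfold Cs; ring
  rw [he]
  exact h

set_option maxHeartbeats 2000000 in
lemma key (α n r : ℝ) (h0 : 0 < r) (h1 : r < 1) :
    n * Cs α n (r ^ 2) + 2 * r ^ 2 * Cd α n (r ^ 2)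
      = Ds (r ^ 2) ^ (α - 1) * Rs (r ^ 2) ^ n *
        ((n + n * Rs (r ^ 2) * r ^ 2 + (α - 1) * Rs (r ^ 2) * r / Ds (r ^ 2)) *
            (1 / (Rs (r ^ 2) * r) + r - 1 / Ds (r ^ 2))
          + Rs (r ^ 2) * r / Ds (r ^ 2) ^ 2 - 1 / (Rs (r ^ 2) * r)) := by
  have hs0 : 0 < r ^ 2 := by positivity
  have hs1 : r ^ 2 < 1 := by nlinarith
  have hsq : Real.sqrt (r ^ 2) = r := Real.sqrt_sq h0.le
  have hD := Ds_pos hs0 hs1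
  have hRp := Rs_pos hs1
  have hα : Ds (r ^ 2) ^ α = Ds (r ^ 2) ^ (α - 1) * Ds (r ^ 2) := by
    rw [← Real.rpow_add_one hD.ne' (α - 1)]
    norm_num
  have hn : Rs (r ^ 2) ^ n = Rs (r ^ 2) ^ (n - 2) * Rs (r ^ 2) ^ 2 := by
    rw [← Real.rpow_natCast (Rs (r ^ 2)) 2, ← Real.rpow_add hRp]
    norm_num
  unfold Cs Cd Ps Pd Wd Wdd
  rw [hsq, hα, hn]
  set D := Ds (r ^ 2) with hDdef
  set A := D ^ (α - 1) with hAdef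
  set B := Rs (r ^ 2) ^ (n - 2) with hBdef
  have hRv : Rs (r ^ 2) = 2 / (1 - r ^ 2) := rfl
  rw [hRv]
  have e1 : (1 : ℝ) - r ^ 2 ≠ 0 := by nlinarith
  have e2 : r ≠ 0 := h0.ne'
  have e3 : D ≠ 0 := hD.ne'
  field_simp
  ring

section Geom

variable {N : ℕ}

lemma rhoF_eq (y : EuclideanSpace ℝ (Fin N)) : rhoF y = Rs (‖y‖ ^ 2) := rfl

lemma dH_eq (y : EuclideanSpace ℝ (Fin N)) : dH y = Ds (‖y‖ ^ 2) := by
  unfold dH Ds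
  rw [Real.sqrt_sq (norm_nonneg y)]

lemma hasGradientAt_Ws (y : EuclideanSpace ℝ (Fin N)) (h0 : y ≠ 0) (h1 : ‖y‖ < 1) :
    HasGradientAt (fun z : EuclideanSpace ℝ (Fin N) => Ws (‖z‖ ^ 2))
      ((2 * Wd (‖y‖ ^ 2)) • y) y := by
  have hn0 : 0 < ‖y‖ := norm_pos_iff.2 h0
  have hs0 : 0 < ‖y‖ ^ 2 := by positivity
  have hs1 : ‖y‖ ^ 2 < 1 := by nlinarith
  have hW := hasDerivAt_Ws hs0 hs1
  have hns : HasFDerivAt (fun z : EuclideanSpace ℝ (Fin N) => ‖z‖ ^ 2)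
      (2 • (innerSL ℝ y)) y := (hasStrictFDerivAt_norm_sq y).hasFDerivAt
  have h := hW.comp_hasFDerivAt y hns
  rw [hasGradientAt_iff_hasFDerivAt]
  refine h.congr_fderiv ?_
  ext v
  simp only [InnerProductSpace.toDual_apply_apply, ContinuousLinearMap.smul_apply,
    ContinuousLinearMap.coe_smul', Pi.smul_apply, innerSL_apply_apply, real_inner_smul_left,
    smul_eq_mul]
  ring

lemma G_eq_Ws {G : EuclideanSpace ℝ (Fin N) → ℝ}
    (hG : ∀ x, G x = rhoF x * ‖x‖ / dH x) :
    G = fun z : EuclideanSpace ℝ (Fin N) => Ws (‖z‖ ^ 2) := by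
  funext z
  rw [hG z, rhoF_eq, dH_eq]
  unfold Ws
  rw [Real.sqrt_sq (norm_nonneg z)]

lemma gradient_G {G : EuclideanSpace ℝ (Fin N) → ℝ}
    (hG : ∀ x, G x = rhoF x * ‖x‖ / dH x)
    (y : EuclideanSpace ℝ (Fin N)) (h0 : y ≠ 0) (h1 : ‖y‖ < 1) :
    gradient G y = (2 * Wd (‖y‖ ^ 2)) • y := by
  rw [G_eq_Ws hG]
  exact (hasGradientAt_Ws y h0 h1).gradient

lemma contDiffAt_Ws {s : ℝ} (h0 : 0 < s) (h1 : s < 1) : ContDiffAt ℝ (⊤ : ℕ∞) Ws s := by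
  have hr := sqrt_pos' h0
  have hr1 := sqrt_lt_one' h0 h1
  have hD := Ds_pos h0 h1
  have hsq : ContDiffAt ℝ (⊤ : ℕ∞) Real.sqrt s := Real.contDiffAt_sqrt h0.ne'
  have hRc : ContDiffAt ℝ (⊤ : ℕ∞) Rs s := by
    apply ContDiffAt.div contDiffAt_const (contDiffAt_const.sub contDiffAt_id)
    intro h; simp at h; linarith
  have hquot : ContDiffAt ℝ (⊤ : ℕ∞) (fun t => (1 + Real.sqrt t) / (1 - Real.sqrt t)) s := by
    apply ContDiffAt.div (contDiffAt_const.add hsq) (contDiffAt_const.sub hsq)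
    intro h; linarith [h]
  have hDc : ContDiffAt ℝ (⊤ : ℕ∞) Ds s := by
    apply ContDiffAt.log hquot
    have : (0:ℝ) < (1 + Real.sqrt s) / (1 - Real.sqrt s) := by
      apply div_pos (by linarith) (by linarith)
    exact this.ne'
  exact (hRc.mul hsq).div hDc hD.ne'

end Geom

end WLG

set_option maxHeartbeats 2000000 in
open WLG in
/-- computation of `∇·(d^α ρ^{N-2} ∇G)` for `G = ρ|x|/d`. -/
theorem weighted_laplacian_G (N : ℕ) (hN : 1 ≤ N) (α : ℝ)
    (G : EuclideanSpace ℝ (Fin N) → ℝ)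
    (hG : ∀ x, G x = rhoF x * ‖x‖ / dH x) :
    ContDiffOn ℝ (⊤ : ℕ∞) G (unitBall N \ {0}) ∧
    ∀ x ∈ unitBall N \ {0},
      divg (fun y => (dH y ^ α * rhoF y ^ ((N : ℝ) - 2)) • gradient G y) x
        = dH x ^ (α - 1) * rhoF x ^ (N : ℝ) *
            (((N : ℝ) + (N : ℝ) * rhoF x * ‖x‖ ^ 2 + (α - 1) * rhoF x * ‖x‖ / dH x)
                * (1 / (rhoF x * ‖x‖) + ‖x‖ - 1 / dH x)
              + rhoF x * ‖x‖ / dH x ^ 2 - 1 / (rhoF x * ‖x‖)) := by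
  constructor
  · intro x hx
    have hx1 : ‖x‖ < 1 := by
      have := hx.1
      simpa [unitBall, mem_ball_zero_iff] using this
    have hx0 : x ≠ 0 := by
      have := hx.2
      simpa using this
    have hn0 : 0 < ‖x‖ := norm_pos_iff.2 hx0
    rw [G_eq_Ws hG]
    apply ContDiffAt.contDiffWithinAt
    exact (contDiffAt_Ws (by positivity) (by nlinarith)).comp x (contDiff_norm_sq ℝ).contDiffAt
  · intro x hx
    have hx1 : ‖x‖ < 1 := by
      have := hx.1
      simpa [unitBall, mem_ball_zero_iff] using this
    have hx0 : x ≠ 0 := by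
      have := hx.2
      simpa using this
    have hn0 : 0 < ‖x‖ := norm_pos_iff.2 hx0
    have hs0 : 0 < ‖x‖ ^ 2 := by positivity
    have hs1 : ‖x‖ ^ 2 < 1 := by nlinarith
    have hopen : IsOpen (unitBall N \ {0}) := by
      have : IsOpen (Metric.ball (0 : EuclideanSpace ℝ (Fin N)) 1) := Metric.isOpen_ball
      exact this.sdiff isClosed_singleton
    have hmem : unitBall N \ {0} ∈ 𝓝 x := hopen.mem_nhds hx
    have hEq : (fun y => (dH y ^ α * rhoF y ^ ((N : ℝ) - 2)) • gradient G y)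
        =ᶠ[𝓝 x] fun y => Cs α (N : ℝ) (‖y‖ ^ 2) • y := by
      filter_upwards [hmem] with y hy
      have hy1 : ‖y‖ < 1 := by
        have := hy.1
        simpa [unitBall, mem_ball_zero_iff] using this
      have hy0 : y ≠ 0 := by
        have := hy.2
        simpa using this
      rw [gradient_G hG y hy0 hy1, dH_eq, rhoF_eq, smul_smul]
      congr 1
      unfold Cs Ps
      ring
    have hdiv : divg (fun y => (dH y ^ α * rhoF y ^ ((N : ℝ) - 2)) • gradient G y) x
        = (N : ℝ) * Cs α (N : ℝ) (‖x‖ ^ 2) + 2 * ‖x‖ ^ 2 * Cd α (N : ℝ) (‖x‖ ^ 2) := by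
      unfold divg
      have hfd : ∀ i, fderiv ℝ
            (fun y => ((dH y ^ α * rhoF y ^ ((N : ℝ) - 2)) • gradient G y) i) x
            (EuclideanSpace.single i 1)
          = Cs α (N : ℝ) (‖x‖ ^ 2) + 2 * Cd α (N : ℝ) (‖x‖ ^ 2) * (x i * x i) := by
        intro i
        have hEqi : (fun y => ((dH y ^ α * rhoF y ^ ((N : ℝ) - 2)) • gradient G y) i)
            =ᶠ[𝓝 x] fun y => Cs α (N : ℝ) (‖y‖ ^ 2) * y i := by
          filter_upwards [hEq] with y hy
          rw [hy]
          rfl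
        rw [hEqi.fderiv_eq]
        have hc : HasFDerivAt (fun y : EuclideanSpace ℝ (Fin N) => Cs α (N : ℝ) (‖y‖ ^ 2))
            ((Cd α (N : ℝ) (‖x‖ ^ 2)) • (2 • innerSL ℝ x)) x := by
          have := (hasDerivAt_Cs α (N : ℝ) hs0 hs1).comp_hasFDerivAt x
            (hasStrictFDerivAt_norm_sq x).hasFDerivAt
          exact this
        have hp : HasFDerivAt (fun y : EuclideanSpace ℝ (Fin N) => y i)
            (EuclideanSpace.proj (𝕜 := ℝ) i) x :=
          (EuclideanSpace.proj (𝕜 := ℝ) i).hasFDerivAt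
        have hmul : HasFDerivAt (fun y : EuclideanSpace ℝ (Fin N) => Cs α (N : ℝ) (‖y‖ ^ 2) * y i)
            _ x := hc.mul hp
        rw [hmul.fderiv]
        simp only [ContinuousLinearMap.add_apply, ContinuousLinearMap.smul_apply,
          ContinuousLinearMap.coe_smul', Pi.smul_apply, innerSL_apply_apply, smul_eq_mul,
          PiLp.proj_apply, EuclideanSpace.single_apply, if_pos rfl]
        rw [EuclideanSpace.inner_single_right]
        simp
        ring
      rw [Finset.sum_congr rfl (fun i _ => hfd i), Finset.sum_add_distrib,
        Finset.sum_const, ← Finset.mul_sum]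
      have hsum : ∑ i, x i * x i = ‖x‖ ^ 2 := by
        rw [← real_inner_self_eq_norm_sq]
        rw [PiLp.inner_apply]
        rfl
      rw [hsum]
      simp only [Finset.card_univ, Fintype.card_fin, nsmul_eq_mul]
      ring
    rw [hdiv, dH_eq, rhoF_eq]
    exact key α (N : ℝ) ‖x‖ hn0 hx1
end
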